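/- arXiv:1005.4601 — 2 statements merged into one kernel-verified Lean document; each statement's English description precedes it below -/
import Mathlib

section
/- The Ewens sampling formula satisfies Kingman's partition-structure consistency relation: for every integer n ≥ 1, every real θ > 0, and every vector (a_1,…,a_n) of non-negative integers with Σ_{i=1}^n i·a_i = n, one has ESF_{n,θ}(a_1,…,a_n) = ((a_1+1)/(n+1))·ESF_{n+1,θ}(a_1+1, a_2,…,a_n, 0) + Σ_{j=2}^{n+1} (j·(a_j+1)/(n+1))·ESF_{n+1,θ}(a_1,…,a_{j−1}−1, a_j+1,…), where a term is interpreted as 0 whenever the indicated vector has a negative entry (and a_{n+1} is taken to be 0). -/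
open Finset

/-- The rising factorial `S_n(θ) = θ(θ+1)⋯(θ+n−1)`. -/
noncomputable def risingFac (θ : ℝ) (n : ℕ) : ℝ := ∏ j ∈ Finset.range n, (θ + j)

/-- The Ewens sampling formula weight of a partition of `n` encoded by a vector
`a : Fin n → ℕ`, where `a i` is the number of parts equal to `i+1`. -/
noncomputable def ESF (n : ℕ) (θ : ℝ) (a : Fin n → ℕ) : ℝ :=
  (Nat.factorial n : ℝ) * θ ^ (∑ i, a i) /
    ((∏ i : Fin n, ((i.1 + 1 : ℝ) ^ (a i) * (Nat.factorial (a i) : ℝ))) * risingFac θ n)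

/-- The finite set of all vectors `(a_1, …, a_n)` of non-negative integers with
`Σ_{i=1}^n i·a_i = n` (each entry is at most `n`, so this filtered set captures all of them). -/
def partitionVectors (n : ℕ) : Finset (Fin n → ℕ) :=
  (Fintype.piFinset fun _ : Fin n => Finset.range (n + 1)).filter
    fun a => ∑ i : Fin n, (i.1 + 1) * a i = n

/-- Extend a vector indexed by `Fin n` to one indexed by `Fin (n+1)`, padding with `0`
(so that `a_{n+1} = 0`). -/
def extVec {n : ℕ} (a : Fin n → ℕ) : Fin (n + 1) → ℕ :=
  fun i => if h : i.1 < n then a ⟨i.1, h⟩ else 0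

/-!
Every term on the right-hand side is a fixed multiple of `ESF n θ a`: adding a new singleton
contributes the factor `θ / (θ + n)`, and growing one of the `a_i` parts of size `i` to size `i + 1`
contributes `i · a_i / (θ + n)`. Since `Σ i · a_i = n`, these factors add up to
`(θ + n) / (θ + n) = 1`.
-/

theorem risingFac_succ (θ : ℝ) (n : ℕ) : risingFac θ (n + 1) = risingFac θ n * (θ + n) :=
  prod_range_succ _ _

theorem risingFac_pos {θ : ℝ} (hθ : 0 < θ) (n : ℕ) : 0 < risingFac θ n :=
  prod_pos fun _ _ => by positivity

noncomputable def cycleWeight {m : ℕ} (a : Fin m → ℕ) : ℝ :=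
  ∏ i : Fin m, ((i.1 + 1 : ℝ) ^ (a i) * (Nat.factorial (a i) : ℝ))

theorem ESF_eq (n : ℕ) (θ : ℝ) (a : Fin n → ℕ) :
    ESF n θ a = n.factorial * θ ^ (∑ i, a i) / (cycleWeight a * risingFac θ n) := rfl

theorem cycleWeight_pos {m : ℕ} (a : Fin m → ℕ) : 0 < cycleWeight a :=
  prod_pos fun _ _ => by positivity

theorem cycleWeight_update_succ {m : ℕ} (b : Fin m → ℕ) (k : Fin m) (v : ℕ) :
    cycleWeight (Function.update b k (v + 1)) =
      (k.1 + 1) * (v + 1) * cycleWeight (Function.update b k v) := by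
  have hrest : ∀ w : ℕ, ∏ i ∈ {k}ᶜ, ((i.1 + 1 : ℝ) ^ Function.update b k w i *
        ((Function.update b k w i).factorial : ℝ)) =
      ∏ i ∈ {k}ᶜ, ((i.1 + 1 : ℝ) ^ b i * ((b i).factorial : ℝ)) := fun w =>
    prod_congr rfl fun i hi => by
      rw [Function.update_of_ne (by simpa using hi)]
  simp only [cycleWeight, Fintype.prod_eq_mul_prod_compl k, Function.update_self, hrest,
    Nat.factorial_succ, pow_succ]
  push_cast
  ring

theorem cycleWeight_update_self_succ {m : ℕ} (b : Fin m → ℕ) (k : Fin m) :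
    cycleWeight (Function.update b k (b k + 1)) = (k.1 + 1) * (b k + 1) * cycleWeight b := by
  rw [cycleWeight_update_succ, Function.update_eq_self]

theorem cycleWeight_eq_update_pred {m : ℕ} (b : Fin m → ℕ) {k : Fin m} (hk : b k ≠ 0) :
    cycleWeight b = (k.1 + 1) * b k * cycleWeight (Function.update b k (b k - 1)) := by
  obtain ⟨v, hv⟩ := Nat.exists_eq_add_one_of_ne_zero hk
  conv_lhs => rw [← Function.update_eq_self k b, hv]
  rw [cycleWeight_update_succ, hv, Nat.add_sub_cancel]
  push_cast
  ring

theorem sum_update_succ {ι : Type*} [Fintype ι] [DecidableEq ι] (b : ι → ℕ) (k : ι) (v : ℕ) :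
    ∑ i, Function.update b k (v + 1) i = ∑ i, Function.update b k v i + 1 := by
  rw [sum_update_of_mem (mem_univ k), sum_update_of_mem (mem_univ k)]
  ring

theorem sum_eq_sum_update_pred {ι : Type*} [Fintype ι] [DecidableEq ι] (b : ι → ℕ) {k : ι}
    (hk : b k ≠ 0) : ∑ i, b i = ∑ i, Function.update b k (b k - 1) i + 1 := by
  conv_lhs => rw [← Function.update_eq_self k b, ← Nat.sub_add_cancel (Nat.pos_of_ne_zero hk)]
  exact sum_update_succ b k _

theorem extVec_castSucc {n : ℕ} (a : Fin n → ℕ) (i : Fin n) : extVec a i.castSucc = a i := by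
  simp [extVec]

theorem extVec_last {n : ℕ} (a : Fin n → ℕ) : extVec a (Fin.last n) = 0 := by
  simp [extVec]

theorem sum_extVec {n : ℕ} (a : Fin n → ℕ) : ∑ i, extVec a i = ∑ i, a i := by
  simp [Fin.sum_univ_castSucc, extVec_castSucc, extVec_last]

theorem cycleWeight_extVec {n : ℕ} (a : Fin n → ℕ) : cycleWeight (extVec a) = cycleWeight a := by
  simp [cycleWeight, Fin.prod_univ_castSucc, extVec_castSucc, extVec_last]

theorem ESF_succ_eq {n : ℕ} {θ : ℝ} (hθ : 0 < θ) {a : Fin n → ℕ} {b : Fin (n + 1) → ℕ}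
    {e : ℕ} {p q : ℝ} (hq : q ≠ 0) (hsum : ∑ i, b i = ∑ i, a i + e)
    (hw : cycleWeight b * p = q * cycleWeight a) :
    ESF (n + 1) θ b = (n + 1) * θ ^ e * p / (q * (θ + n)) * ESF n θ a := by
  have hb := (cycleWeight_pos b).ne'
  have ha := (cycleWeight_pos a).ne'
  have hS := (risingFac_pos hθ n).ne'
  have hθn : θ + n ≠ 0 := by positivity
  have hp : p ≠ 0 := by
    rintro rfl
    exact mul_ne_zero hq ha (by simpa using hw.symm)
  rw [ESF_eq, ESF_eq, hsum, risingFac_succ, Nat.factorial_succ, pow_add,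
    eq_div_of_mul_eq hp hw]
  push_cast
  field_simp

theorem ESF_add_singleton {n : ℕ} {θ : ℝ} (hθ : 0 < θ) (a : Fin n → ℕ) :
    ((extVec a 0 + 1 : ℝ) / (n + 1)) *
        ESF (n + 1) θ (Function.update (extVec a) 0 (extVec a 0 + 1)) =
      θ / (θ + n) * ESF n θ a := by
  have hsum : ∑ i, Function.update (extVec a) 0 (extVec a 0 + 1) i = ∑ i, a i + 1 := by
    rw [sum_update_succ, Function.update_eq_self, sum_extVec]
  have hw : cycleWeight (Function.update (extVec a) 0 (extVec a 0 + 1)) * 1 =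
      (extVec a 0 + 1) * cycleWeight a := by
    rw [cycleWeight_update_self_succ, cycleWeight_extVec]
    simp
  rw [ESF_succ_eq hθ (by positivity) hsum hw]
  have hθn : θ + n ≠ 0 := by positivity
  field_simp

theorem ESF_grow_part {n : ℕ} {θ : ℝ} (hθ : 0 < θ) (a : Fin n → ℕ) {t : Fin n} (ht : a t ≠ 0) :
    (((t.1 + 2) * (extVec a t.succ + 1) : ℝ) / (n + 1)) *
        ESF (n + 1) θ
          (Function.update (Function.update (extVec a) t.castSucc (extVec a t.castSucc - 1))
            t.succ (extVec a t.succ + 1)) =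
      (t.1 + 1) * a t / (θ + n) * ESF n θ a := by
  set b := extVec a
  set b' := Function.update b t.castSucc (b t.castSucc - 1)
  have hbt : b t.castSucc = a t := extVec_castSucc a t
  have hne : t.succ ≠ t.castSucc := (Fin.castSucc_lt_succ (i := t)).ne'
  have hb'k : b' t.succ = b t.succ := Function.update_of_ne hne _ _
  have hbt0 : b t.castSucc ≠ 0 := hbt ▸ ht
  have hsum : ∑ i, Function.update b' t.succ (b t.succ + 1) i = ∑ i, a i + 0 := by
    rw [← hb'k, sum_update_succ, Function.update_eq_self, ← sum_extVec a,
      sum_eq_sum_update_pred b hbt0]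
  have hw : cycleWeight (Function.update b' t.succ (b t.succ + 1)) * ((t.1 + 1) * a t) =
      ((t.1 + 2) * (b t.succ + 1)) * cycleWeight a := by
    rw [← hbt, ← hb'k, cycleWeight_update_self_succ, ← cycleWeight_extVec a,
      cycleWeight_eq_update_pred b hbt0]
    simp only [Fin.val_succ, Fin.val_castSucc]
    push_cast
    ring
  rw [ESF_succ_eq hθ (by positivity) hsum hw]
  have hθn : θ + n ≠ 0 := by positivity
  field_simp

theorem ewens_partition_structure_consistency_general (n : ℕ) (θ : ℝ) (hθ : 0 < θ)
    (a : Fin n → ℕ) (ha : ∑ i : Fin n, (i.1 + 1) * a i = n) :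
    ESF n θ a =
      ((extVec a 0 + 1 : ℝ) / (n + 1)) *
          ESF (n + 1) θ (Function.update (extVec a) 0 (extVec a 0 + 1)) +
        ∑ t : Fin n,
          (if extVec a t.castSucc = 0 then 0 else
            (((t.1 + 2) * (extVec a t.succ + 1) : ℝ) / (n + 1)) *
              ESF (n + 1) θ
                (Function.update
                  (Function.update (extVec a) t.castSucc (extVec a t.castSucc - 1))
                  t.succ (extVec a t.succ + 1))) := by
  have hweight : ∑ t : Fin n, (t.1 + 1 : ℝ) * a t = n := by exact_mod_cast ha
  have hθn : θ + n ≠ 0 := by positivity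
  calc ESF n θ a
        = θ / (θ + n) * ESF n θ a + ∑ t : Fin n, (t.1 + 1) * a t / (θ + n) * ESF n θ a := by
        rw [← sum_mul, ← sum_div, hweight, ← add_mul, ← add_div, div_self hθn, one_mul]
    _ = _ := by
        rw [ESF_add_singleton hθ]
        congr 1
        refine sum_congr rfl fun t _ => ?_
        split_ifs with ht <;> rw [extVec_castSucc] at ht
        · simp [ht]
        · exact (ESF_grow_part hθ a ht).symm

theorem ewens_partition_structure_consistency (n : ℕ) (hn : 1 ≤ n) (θ : ℝ) (hθ : 0 < θ)
    (a : Fin n → ℕ) (ha : ∑ i : Fin n, (i.1 + 1) * a i = n) :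
    ESF n θ a =
      ((extVec a 0 + 1 : ℝ) / (n + 1)) *
          ESF (n + 1) θ (Function.update (extVec a) 0 (extVec a 0 + 1)) +
        ∑ t : Fin n,
          (if extVec a t.castSucc = 0 then 0 else
            (((t.1 + 2) * (extVec a t.succ + 1) : ℝ) / (n + 1)) *
              ESF (n + 1) θ
                (Function.update
                  (Function.update (extVec a) t.castSucc (extVec a t.castSucc - 1))
                  t.succ (extVec a t.succ + 1))) :=
  ewens_partition_structure_consistency_general n θ hθ a ha
end

section
/- As n → ∞, the proportion of permutations of an n-element set that possess a cycle of length strictly greater than n/2 (i.e., the number of such permutations divided by n!) converges to log 2. -/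
open Finset Filter
open scoped Classical

/-- The multiset of all cycle lengths of a permutation of `Fin n`, counting each fixed point
as a cycle of length 1. -/
def fullCycleType {n : ℕ} (σ : Equiv.Perm (Fin n)) : Multiset ℕ :=
  σ.cycleType + Multiset.replicate (n - σ.support.card) 1

/-!
For `1 ≤ l ≤ n`, a given point `a` lies on a cycle of length `l` for exactly `(n - 1)!`
permutations of an `n`-element set: replacing `σ` by `σ * swap a (σ a)` cuts `σ a` out of the
cycle through `a`, which matches the permutations with `σ a = b` and an `(l + 1)`-cycle through
`a` with the permutations of the other `n - 1` points having an `l`-cycle through `a`.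

For `2 * l > n` a permutation has at most one `l`-cycle, so double counting the pairs `(σ, a)`
with `a` on an `l`-cycle of `σ` shows that exactly `n! / l` permutations have one, and these
events are disjoint for the different `l > n / 2`. The probability is therefore
`H n - H (n / 2)`, which tends to `log 2` because `H n - log n` converges.
-/

open Fintype
open scoped Nat Topology

lemma harmonic_sub_harmonic_eq_sum_Ioc {m n : ℕ} (hmn : m ≤ n) :
    harmonic n - harmonic m = ∑ i ∈ Ioc m n, (i : ℚ)⁻¹ := by
  rw [harmonic_eq_sum_Icc, harmonic_eq_sum_Icc, ← zero_add 1, Icc_add_one_left_eq_Ioc,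
    Icc_add_one_left_eq_Ioc, sub_eq_iff_eq_add', sum_Ioc_consecutive _ (Nat.zero_le m) hmn]

lemma tendsto_harmonic_sub_harmonic_div {k : ℕ} (hk : k ≠ 0) :
    Tendsto (fun n : ℕ => (harmonic n : ℝ) - harmonic (n / k)) atTop (𝓝 (Real.log k)) := by
  have hdiv : Tendsto (fun n : ℕ => n / k) atTop atTop := Nat.tendsto_div_const_atTop hk
  have hratio : Tendsto (fun n : ℕ => ((n / k : ℕ) : ℝ) / n) atTop (𝓝 (k : ℝ)⁻¹) := by
    have := (tendsto_nat_floor_mul_div_atTop (a := (k : ℝ)⁻¹) (by positivity)).comp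
      tendsto_natCast_atTop_atTop
    refine this.congr fun n => ?_
    simp [Function.comp, ← Nat.floor_div_eq_div (K := ℝ), inv_mul_eq_div]
  have hlog :
      Tendsto (fun n : ℕ => Real.log n - Real.log (n / k : ℕ)) atTop (𝓝 (Real.log k)) := by
    have := ((Real.continuousAt_log (by positivity)).tendsto.comp hratio).neg
    rw [Real.log_inv, neg_neg] at this
    refine this.congr' ?_
    filter_upwards [eventually_ge_atTop k] with n hn
    have hn0 : (n : ℝ) ≠ 0 := Nat.cast_ne_zero.2 (by omega)
    have hnk : ((n / k : ℕ) : ℝ) ≠ 0 := by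
      exact_mod_cast (Nat.div_pos hn (Nat.pos_of_ne_zero hk)).ne'
    simp [Real.log_div hnk hn0]
  have hsplit :=
    (Real.tendsto_harmonic_sub_log.sub (Real.tendsto_harmonic_sub_log.comp hdiv)).add hlog
  rw [sub_self, zero_add] at hsplit
  exact hsplit.congr fun n => by simp only [Function.comp]; ring

namespace Nat.Partition

lemma add_le_of_mem_parts {n : ℕ} {p : n.Partition} {l l' : ℕ} (hl : l ∈ p.parts)
    (hl' : l' ∈ p.parts) (hne : l ≠ l') : l + l' ≤ n := by
  rw [← p.parts_sum, ← Multiset.cons_erase hl, Multiset.sum_cons]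
  exact Nat.add_le_add_left (Multiset.le_sum_of_mem ((Multiset.mem_erase_of_ne hne.symm).2 hl')) l

end Nat.Partition

namespace Equiv.Perm

variable {α : Type*}

lemma sameCycle_ofSubtype {p : α → Prop} [DecidablePred p] {τ : Perm (Subtype p)}
    {x y : Subtype p} : (ofSubtype τ).SameCycle x y ↔ τ.SameCycle x y :=
  sameCycle_extendDomain (f := Equiv.refl _)

variable [Fintype α] [DecidableEq α]

def sameCycleFinset (σ : Perm α) (a : α) : Finset α := {x | σ.SameCycle a x}

def cycleLength (σ : Perm α) (a : α) : ℕ := #(σ.sameCycleFinset a)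

@[simp]
lemma mem_sameCycleFinset {σ : Perm α} {a x : α} :
    x ∈ σ.sameCycleFinset a ↔ σ.SameCycle a x := by
  simp [sameCycleFinset]

lemma self_mem_sameCycleFinset (σ : Perm α) (a : α) : a ∈ σ.sameCycleFinset a :=
  mem_sameCycleFinset.2 (SameCycle.refl σ a)

lemma apply_mem_sameCycleFinset {σ : Perm α} {a x : α} (hx : x ∈ σ.sameCycleFinset a) :
    σ x ∈ σ.sameCycleFinset a :=
  mem_sameCycleFinset.2 (sameCycle_apply_right.2 (mem_sameCycleFinset.1 hx))

lemma sameCycleFinset_subset {σ : Perm α} {a : α} {s : Finset α} (ha : a ∈ s)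
    (hs : ∀ x ∈ s, σ x ∈ s) : σ.sameCycleFinset a ⊆ s := by
  intro x hx
  obtain ⟨i, -, rfl⟩ := (mem_sameCycleFinset.1 hx).exists_pow_eq'
  clear hx
  induction i with
  | zero => simpa using ha
  | succ i ih => rw [_root_.pow_succ', mul_apply]; exact hs _ ih

lemma sameCycleFinset_eq_of_sameCycle {σ : Perm α} {a x : α} (h : σ.SameCycle a x) :
    σ.sameCycleFinset x = σ.sameCycleFinset a := by
  ext y
  simp only [mem_sameCycleFinset]
  exact ⟨h.trans, h.symm.trans⟩

lemma cycleLength_eq_one_iff {σ : Perm α} {a : α} : σ.cycleLength a = 1 ↔ σ a = a := by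
  refine ⟨fun h => ?_, fun h => card_eq_one.2 ⟨a, ?_⟩⟩
  · obtain ⟨b, hb⟩ := card_eq_one.1 h
    have ha := self_mem_sameCycleFinset σ a
    have hσa := apply_mem_sameCycleFinset ha
    rw [hb, mem_singleton] at ha hσa
    rw [hσa, ha]
  · ext x
    simp only [mem_sameCycleFinset, mem_singleton]
    exact ⟨fun hx => (hx.eq_of_left h).symm, fun hx => hx ▸ SameCycle.refl σ a⟩

lemma sameCycleFinset_mul_swap {σ : Perm α} {a b : α} (hb : σ a = b) (hab : a ≠ b) :
    (σ * swap a b).sameCycleFinset a = (σ.sameCycleFinset a).erase b := by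
  have hbσ : b ∈ σ.sameCycleFinset a :=
    hb ▸ apply_mem_sameCycleFinset (self_mem_sameCycleFinset σ a)
  apply Subset.antisymm
  · refine sameCycleFinset_subset (mem_erase.2 ⟨hab, self_mem_sameCycleFinset σ a⟩) ?_
    intro x hx
    obtain ⟨hxb, hx⟩ := mem_erase.1 hx
    refine mem_erase.2 ⟨?_, apply_mem_sameCycleFinset ?_⟩
    · have hx' : swap a b x ≠ a := by rwa [Ne, swap_apply_eq_iff, swap_apply_left]
      have := σ.injective.ne hx'
      rwa [hb] at this
    · rw [swap_apply_def]
      split_ifs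
      exacts [hbσ, hx]
  · have hσ : σ.sameCycleFinset a ⊆ insert b ((σ * swap a b).sameCycleFinset a) := by
      refine sameCycleFinset_subset (mem_insert_of_mem (self_mem_sameCycleFinset _ a)) ?_
      intro x hx
      by_cases hxa : x = a
      · simp [hxa, hb]
      have hσx : σ x = (σ * swap a b) (swap a b x) := by simp
      rw [hσx]
      by_cases hxb : x = b
      · rw [hxb, swap_apply_right]
        exact mem_insert_of_mem (apply_mem_sameCycleFinset (self_mem_sameCycleFinset _ a))
      · rw [swap_apply_of_ne_of_ne hxa hxb]
        exact mem_insert_of_mem (apply_mem_sameCycleFinset ((mem_insert.1 hx).resolve_left hxb))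
    exact (erase_subset_erase b hσ).trans (erase_insert_subset b _)

lemma cycleLength_mul_swap_add_one {σ : Perm α} {a b : α} (hb : σ a = b) (hab : a ≠ b) :
    (σ * swap a b).cycleLength a + 1 = σ.cycleLength a := by
  rw [cycleLength, sameCycleFinset_mul_swap hb hab,
    card_erase_add_one (hb ▸ apply_mem_sameCycleFinset (self_mem_sameCycleFinset σ a))]
  rfl

lemma cycleLength_ofSubtype {p : α → Prop} [DecidablePred p] (τ : Perm (Subtype p)) {a : α}
    (ha : p a) : (ofSubtype τ).cycleLength a = τ.cycleLength ⟨a, ha⟩ := by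
  have h : (ofSubtype τ).sameCycleFinset a
      = (τ.sameCycleFinset ⟨a, ha⟩).map (Function.Embedding.subtype p) := by
    ext x
    simp only [mem_sameCycleFinset, Finset.mem_map]
    constructor
    · intro hx
      by_cases hpx : p x
      · exact ⟨⟨x, hpx⟩, sameCycle_ofSubtype.1 hx, rfl⟩
      · exact absurd ((hx.eq_of_right (ofSubtype_apply_of_not_mem τ hpx)) ▸ ha) hpx
    · rintro ⟨y, hy, rfl⟩
      exact sameCycle_ofSubtype.2 hy
  rw [cycleLength, h, card_map]
  rfl

lemma card_filter_apply_eq_self_and (b : α) (P : Perm α → Prop) [DecidablePred P] :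
    #{σ : Perm α | σ b = b ∧ P σ} = #{τ : Perm {x // x ≠ b} | P (ofSubtype τ)} := by
  symm
  refine card_bij (fun τ _ => ofSubtype τ) ?_ (fun _ _ _ _ h => ofSubtype_injective h) ?_
  · intro τ hτ
    simp only [mem_filter, mem_univ, true_and] at hτ ⊢
    exact ⟨ofSubtype_apply_of_not_mem τ (by simp), hτ⟩
  · intro σ hσ
    simp only [mem_filter, mem_univ, true_and] at hσ
    have hp : ∀ x, σ x ≠ b ↔ x ≠ b := fun x => σ.injective.ne_iff' hσ.1
    have hfix : ∀ x, σ x ≠ x → x ≠ b := by rintro x hx rfl; exact hx hσ.1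
    refine ⟨σ.subtypePerm hp, ?_, ofSubtype_subtypePerm hp hfix⟩
    simpa [ofSubtype_subtypePerm hp hfix] using hσ.2

lemma card_cycleLength_eq_one (a : α) :
    #{σ : Perm α | σ.cycleLength a = 1} = (card α - 1)! := by
  simpa [cycleLength_eq_one_iff, card_perm, card_subtype_compl] using
    card_filter_apply_eq_self_and a (fun _ => True)

lemma card_cycleLength_eq_add_one_and_apply_eq {a b : α} (hab : a ≠ b) (l : ℕ) :
    #{σ : Perm α | σ.cycleLength a = l + 1 ∧ σ a = b}
      = #{τ : Perm {x // x ≠ b} | τ.cycleLength ⟨a, hab⟩ = l} := by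
  calc #{σ : Perm α | σ.cycleLength a = l + 1 ∧ σ a = b}
      = #{τ : Perm α | τ b = b ∧ τ.cycleLength a = l} := by
        refine card_nbij' (· * swap a b) (· * swap a b) ?_ ?_ ?_ ?_
        · intro σ hσ
          simp only [coe_filter, Set.mem_ofPred_eq, mem_univ, true_and] at hσ ⊢
          refine ⟨by simp [hσ.2], ?_⟩
          have := cycleLength_mul_swap_add_one hσ.2 hab
          omega
        · intro τ hτ
          simp only [coe_filter, Set.mem_ofPred_eq, mem_univ, true_and] at hτ ⊢
          have hb : (τ * swap a b) a = b := by simp [hτ.1]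
          refine ⟨?_, hb⟩
          rw [← cycleLength_mul_swap_add_one hb hab, mul_swap_mul_self, hτ.2]
        · intro σ _
          exact mul_swap_mul_self a b σ
        · intro τ _
          exact mul_swap_mul_self a b τ
    _ = _ := by
        rw [card_filter_apply_eq_self_and]
        simp [cycleLength_ofSubtype (p := (· ≠ b)) _ hab]

theorem card_cycleLength_eq (a : α) {l : ℕ} (hl : 0 < l) (hlα : l ≤ card α) :
    #{σ : Perm α | σ.cycleLength a = l} = (card α - 1)! := by
  induction l generalizing α with
  | zero => omega
  | succ l ih =>
    obtain rfl | hl := l.eq_zero_or_pos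
    · exact card_cycleLength_eq_one a
    have hmaps :
        ∀ σ ∈ ({σ : Perm α | σ.cycleLength a = l + 1} : Finset (Perm α)),
          σ a ∈ univ.erase a := by
      intro σ hσ
      have h1 : σ.cycleLength a ≠ 1 := by rw [(mem_filter.1 hσ).2]; omega
      simpa [cycleLength_eq_one_iff] using h1
    have hfiber : ∀ b ∈ univ.erase a,
        #{σ : Perm α | σ.cycleLength a = l + 1 ∧ σ a = b} = (card α - 2)! := by
      intro b hb
      have hab : a ≠ b := (ne_of_mem_erase hb).symm
      have hcard : card {x // x ≠ b} = card α - 1 := by simp [card_subtype_compl]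
      rw [card_cycleLength_eq_add_one_and_apply_eq hab,
        ih (α := {x // x ≠ b}) ⟨a, hab⟩ hl (by omega), hcard]
      rfl
    rw [card_eq_sum_card_fiberwise hmaps]
    simp only [filter_filter]
    rw [sum_congr rfl hfiber, sum_const, card_erase_of_mem (mem_univ a), card_univ, smul_eq_mul,
      show card α - 2 = card α - 1 - 1 by omega, Nat.mul_factorial_pred (by omega)]

lemma sameCycleFinset_eq_support_cycleOf {σ : Perm α} {a : α} (ha : a ∈ σ.support) :
    σ.sameCycleFinset a = (σ.cycleOf a).support := by
  ext x
  rw [mem_sameCycleFinset, mem_support_cycleOf_iff]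
  exact ⟨fun h => ⟨h, ha⟩, And.left⟩

lemma cycleLength_mem_parts_partition (σ : Perm α) (a : α) :
    σ.cycleLength a ∈ σ.partition.parts := by
  rw [parts_partition, Multiset.mem_add]
  by_cases ha : a ∈ σ.support
  · left
    rw [cycleType_def, Multiset.mem_map]
    exact ⟨σ.cycleOf a, cycleOf_mem_cycleFactorsFinset_iff.2 ha,
      by rw [cycleLength, sameCycleFinset_eq_support_cycleOf ha]; rfl⟩
  · right
    rw [cycleLength_eq_one_iff.2 (notMem_support.1 ha), Multiset.mem_replicate,
      Nat.sub_ne_zero_iff_lt]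
    exact ⟨card_lt_univ_of_notMem ha, rfl⟩

lemma exists_cycleLength_eq_of_mem_parts_partition {σ : Perm α} {l : ℕ}
    (hl : l ∈ σ.partition.parts) : ∃ a, σ.cycleLength a = l := by
  rw [parts_partition, Multiset.mem_add] at hl
  rcases hl with hl | hl
  · rw [cycleType_def, Multiset.mem_map] at hl
    obtain ⟨c, hc, rfl⟩ := hl
    obtain ⟨a, ha⟩ := (mem_cycleFactorsFinset_iff.1 hc).1.nonempty_support
    have hca : c = σ.cycleOf a := cycle_is_cycleOf ha hc
    refine ⟨a, ?_⟩
    rw [cycleLength, sameCycleFinset_eq_support_cycleOf (mem_cycleFactorsFinset_support_le hc ha),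
      ← hca]
    rfl
  · obtain ⟨hne, rfl⟩ := Multiset.mem_replicate.1 hl
    obtain ⟨a, -, ha⟩ := exists_mem_notMem_of_card_lt_card
      (Nat.lt_of_sub_ne_zero hne : #σ.support < #(univ : Finset α))
    exact ⟨a, cycleLength_eq_one_iff.2 (notMem_support.1 ha)⟩

lemma card_filter_cycleLength_eq {σ : Perm α} {l : ℕ} (hl : card α < 2 * l)
    (hσ : l ∈ σ.partition.parts) : #{a | σ.cycleLength a = l} = l := by
  obtain ⟨a, ha⟩ := exists_cycleLength_eq_of_mem_parts_partition hσ
  suffices h : ({x | σ.cycleLength x = l} : Finset α) = σ.sameCycleFinset a by rw [h]; exact ha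
  ext x
  simp only [mem_filter, mem_univ, true_and, mem_sameCycleFinset]
  refine ⟨fun hx => ?_, fun hx => ?_⟩
  · by_contra hax
    have hdisj : _root_.Disjoint (σ.sameCycleFinset a) (σ.sameCycleFinset x) :=
      disjoint_left.2 fun y hya hyx =>
        hax ((mem_sameCycleFinset.1 hya).trans (mem_sameCycleFinset.1 hyx).symm)
    have := card_le_univ (σ.sameCycleFinset a ∪ σ.sameCycleFinset x)
    rw [card_union_of_disjoint hdisj] at this
    change σ.cycleLength a + σ.cycleLength x ≤ card α at this
    omega
  · rw [cycleLength, sameCycleFinset_eq_of_sameCycle hx]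
    exact ha

theorem mul_card_filter_mem_parts_partition {l : ℕ} (hlα : l ≤ card α)
    (hl : card α < 2 * l) :
    l * #{σ : Perm α | l ∈ σ.partition.parts} = (card α)! := by
  have hrow : ∀ σ : Perm α,
      #{a | σ.cycleLength a = l} = if l ∈ σ.partition.parts then l else 0 := by
    intro σ
    split_ifs with hσ
    · exact card_filter_cycleLength_eq hl hσ
    · exact card_eq_zero.2 (filter_eq_empty_iff.2 fun a _ ha =>
        hσ (ha ▸ cycleLength_mem_parts_partition σ a))
  calc l * #{σ : Perm α | l ∈ σ.partition.parts}
      = ∑ σ : Perm α, #{a | σ.cycleLength a = l} := by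
        simp only [hrow, ← sum_filter, sum_const, smul_eq_mul, mul_comm]
    _ = ∑ a : α, #{σ : Perm α | σ.cycleLength a = l} := by
        simp only [card_filter]
        exact sum_comm
    _ = (card α)! := by
        rw [sum_congr rfl fun a _ => card_cycleLength_eq a (by omega) hlα, sum_const, card_univ,
          smul_eq_mul, Nat.mul_factorial_pred (by omega)]

theorem card_filter_exists_mem_parts_partition_gt_half :
    #{σ : Perm α | ∃ l ∈ σ.partition.parts, card α < 2 * l}
      = ∑ l ∈ Ioc (card α / 2) (card α), #{σ : Perm α | l ∈ σ.partition.parts} := by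
  have hhalf : ∀ l, card α / 2 < l ↔ card α < 2 * l := fun l => by omega
  rw [← card_biUnion]
  · congr 1
    ext σ
    simp only [mem_filter, mem_univ, true_and, mem_biUnion, mem_Ioc, hhalf]
    exact ⟨fun ⟨l, hl, h⟩ => ⟨l, ⟨h, σ.partition.le_of_mem_parts hl⟩, hl⟩,
      fun ⟨l, ⟨h, _⟩, hl⟩ => ⟨l, hl, h⟩⟩
  · intro l hl l' hl' hne
    simp only [coe_Ioc, Set.mem_Ioc, hhalf] at hl hl'
    refine disjoint_filter.2 fun σ _ hσl hσl' => ?_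
    have := σ.partition.add_le_of_mem_parts hσl hσl' hne
    omega

theorem card_filter_exists_mem_parts_partition_gt_half_div_factorial :
    (#{σ : Perm α | ∃ l ∈ σ.partition.parts, card α < 2 * l} : ℝ) / (card α)!
      = harmonic (card α) - harmonic (card α / 2) := by
  rw [card_filter_exists_mem_parts_partition_gt_half, Nat.cast_sum, sum_div]
  have hsub := congrArg (Rat.cast : ℚ → ℝ)
    (harmonic_sub_harmonic_eq_sum_Ioc (Nat.div_le_self (card α) 2))
  push_cast at hsub
  rw [hsub]
  refine sum_congr rfl fun l hl => ?_
  rw [mem_Ioc] at hl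
  have hmul := mul_card_filter_mem_parts_partition (α := α) hl.2 (by omega)
  have hcard : #{σ : Perm α | l ∈ σ.partition.parts} ≠ 0 := fun h =>
    (card α).factorial_ne_zero (by rw [← hmul, h, mul_zero])
  rw [← hmul, Nat.cast_mul, div_mul_cancel_right₀ (Nat.cast_ne_zero.2 hcard)]

end Equiv.Perm

lemma fullCycleType_eq_parts_partition {n : ℕ} (σ : Equiv.Perm (Fin n)) :
    fullCycleType σ = σ.partition.parts := by
  simp [fullCycleType, Equiv.Perm.parts_partition]

theorem prob_long_cycle_tendsto_log_two :
    Tendsto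
      (fun n : ℕ =>
        ((Finset.univ.filter fun σ : Equiv.Perm (Fin n) =>
            ∃ l ∈ fullCycleType σ, 2 * l > n).card : ℝ) / (Nat.factorial n : ℝ))
      atTop (nhds (Real.log 2)) := by
  refine (tendsto_harmonic_sub_harmonic_div two_ne_zero).congr fun n => ?_
  simpa [fullCycleType_eq_parts_partition] using
    (Equiv.Perm.card_filter_exists_mem_parts_partition_gt_half_div_factorial (α := Fin n)).symm
end
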